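/- Let A₂, A₃, B₂, B₃ > 0 and d₂⁰, d₃⁰ > 0 be reals with (B₂/2)·exp(−2d₂⁰) = (B₃/2)·exp(−2d₃⁰) =: v₁⁰, define f_j(t) = (A_j/4)·(2t + sinh(2t)) and d_j(v) = −(1/2)·log(2v/B_j) for j = 2, 3, set ṽ_j⁰ = (A_j/4)·(1 + cosh(2d_j⁰)). Define V on (0, ∞) by V(v₁) = v₁ + f₂(d₂(v₁)) + f₃(d₃⁰ + d₂⁰ − d₂(v₁)) for v₁ ≤ v₁⁰, and V(v₁) = v₁ + f₂(d₂(v₁)) + f₃(d₃(v₁)) for v₁ ≥ v₁⁰. Then V has derivative 1 − ṽ₂⁰/v₁⁰ + ṽ₃⁰/v₁⁰ within (0, v₁⁰] at v₁⁰, and derivative 1 − ṽ₂⁰/v₁⁰ − ṽ₃⁰/v₁⁰ within [v₁⁰, ∞) at v₁⁰. -/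

import Mathlib

/-!
Near `v₁⁰` every piece of `V` is smooth, and `V` agrees with one smooth expression on each
side, so each one-sided derivative is the two-sided derivative of that expression. By the
chain rule the collar of width `d` contributes `f'(d) · d'(v₁⁰) = 2ṽ⁰ · (-1/(2v₁⁰))`; on the
left the third collar has width `d₃⁰ + d₂⁰ - d₂(v)`, which flips the sign of its contribution.
-/

open Real

noncomputable section

def collarVolume (A t : ℝ) : ℝ := A / 4 * (2 * t + sinh (2 * t))

def collarWidth (B v : ℝ) : ℝ := -(1 / 2) * log (2 * v / B)

theorem hasDerivAt_collarVolume (A t : ℝ) :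
    HasDerivAt (collarVolume A) (2 * (A / 4 * (1 + cosh (2 * t)))) t := by
  have h2t : HasDerivAt (fun s : ℝ => 2 * s) 2 t := by
    simpa using (hasDerivAt_id t).const_mul 2
  refine ((h2t.add ((hasDerivAt_sinh (2 * t)).comp t h2t)).const_mul (A / 4)).congr_deriv ?_
  ring

theorem hasDerivAt_collarWidth {B v : ℝ} (hB : B ≠ 0) (hv : v ≠ 0) :
    HasDerivAt (collarWidth B) (-(1 / (2 * v))) v := by
  have hlin : HasDerivAt (fun w : ℝ => 2 * w / B) (2 / B) v := by
    simpa using ((hasDerivAt_id v).const_mul 2).div_const B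
  exact (((hasDerivAt_log (by positivity)).comp v hlin).const_mul (-(1 / 2))).congr_deriv
    (by field_simp)

theorem collarWidth_half_mul_exp {B : ℝ} (hB : B ≠ 0) (d : ℝ) :
    collarWidth B (B / 2 * exp (-2 * d)) = d := by
  rw [collarWidth, show 2 * (B / 2 * exp (-2 * d)) / B = exp (-2 * d) by field_simp, log_exp]
  ring

end

theorem caseIII_onesided_derivs_general (A₂ A₃ B₂ B₃ d₂ d₃ v₁ vt₂ vt₃ : ℝ)
    (hB₂ : 0 < B₂) (hB₃ : 0 < B₃)
    (hv₁₂ : v₁ = B₂ / 2 * Real.exp (-2 * d₂))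
    (hv₁₃ : v₁ = B₃ / 2 * Real.exp (-2 * d₃))
    (f₂ f₃ dd₂ dd₃ : ℝ → ℝ)
    (hf₂ : ∀ t, f₂ t = A₂ / 4 * (2 * t + Real.sinh (2 * t)))
    (hf₃ : ∀ t, f₃ t = A₃ / 4 * (2 * t + Real.sinh (2 * t)))
    (hdd₂ : ∀ v, dd₂ v = -(1 / 2) * Real.log (2 * v / B₂))
    (hdd₃ : ∀ v, dd₃ v = -(1 / 2) * Real.log (2 * v / B₃))
    (hvt₂ : vt₂ = A₂ / 4 * (1 + Real.cosh (2 * d₂)))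
    (hvt₃ : vt₃ = A₃ / 4 * (1 + Real.cosh (2 * d₃)))
    (V : ℝ → ℝ)
    (hVle : ∀ v, 0 < v → v ≤ v₁ → V v = v + f₂ (dd₂ v) + f₃ (d₃ + d₂ - dd₂ v))
    (hVge : ∀ v, v₁ ≤ v → V v = v + f₂ (dd₂ v) + f₃ (dd₃ v)) :
    HasDerivWithinAt V (1 - vt₂ / v₁ + vt₃ / v₁) (Set.Ioc 0 v₁) v₁ ∧
    HasDerivWithinAt V (1 - vt₂ / v₁ - vt₃ / v₁) (Set.Ici v₁) v₁ := by
  obtain rfl : f₂ = collarVolume A₂ := funext hf₂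
  obtain rfl : f₃ = collarVolume A₃ := funext hf₃
  obtain rfl : dd₂ = collarWidth B₂ := funext hdd₂
  obtain rfl : dd₃ = collarWidth B₃ := funext hdd₃
  have hv₁ : 0 < v₁ := by rw [hv₁₂]; positivity
  have hw₂ : collarWidth B₂ v₁ = d₂ := hv₁₂ ▸ collarWidth_half_mul_exp hB₂.ne' d₂
  have hw₃ : collarWidth B₃ v₁ = d₃ := hv₁₃ ▸ collarWidth_half_mul_exp hB₃.ne' d₃
  have hD₂ := hasDerivAt_collarWidth hB₂.ne' hv₁.ne'
  have hD₃ := hasDerivAt_collarWidth hB₃.ne' hv₁.ne'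
  have hC₂ := (hasDerivAt_collarVolume A₂ _).comp v₁ hD₂
  have hC₃ := (hasDerivAt_collarVolume A₃ _).comp v₁ hD₃
  have hC₃' := (hasDerivAt_collarVolume A₃ _).comp v₁ (hD₂.const_sub (d₃ + d₂))
  rw [hw₂] at hC₂
  rw [hw₂, add_sub_cancel_right] at hC₃'
  rw [hw₃] at hC₃
  subst hvt₂ hvt₃
  constructor
  · refine HasDerivWithinAt.congr_of_mem ?_ (fun v hv => hVle v hv.1 hv.2) ⟨hv₁, le_rfl⟩
    refine ((((hasDerivAt_id v₁).add hC₂).add hC₃').congr_deriv ?_).hasDerivWithinAt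
    field_simp
    ring
  · refine HasDerivWithinAt.congr_of_mem ?_ (fun v hv => hVge v hv) Set.self_mem_Ici
    refine ((((hasDerivAt_id v₁).add hC₂).add hC₃).congr_deriv ?_).hasDerivWithinAt
    field_simp
    ring

/-- Case III of the main theorem: the one-sided derivatives of the total peripheral
volume `V` at `v₁⁰` are `1 − vt₂⁰/v₁⁰ + vt₃⁰/v₁⁰` (within `(0, v₁⁰]`) and
`1 − vt₂⁰/v₁⁰ − vt₃⁰/v₁⁰` (within `[v₁⁰, ∞)`). -/
theorem caseIII_onesided_derivs (A₂ A₃ B₂ B₃ d₂ d₃ v₁ vt₂ vt₃ : ℝ)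
    (hA₂ : 0 < A₂) (hA₃ : 0 < A₃) (hB₂ : 0 < B₂) (hB₃ : 0 < B₃)
    (hd₂ : 0 < d₂) (hd₃ : 0 < d₃)
    (hv₁₂ : v₁ = B₂ / 2 * Real.exp (-2 * d₂))
    (hv₁₃ : v₁ = B₃ / 2 * Real.exp (-2 * d₃))
    (f₂ f₃ dd₂ dd₃ : ℝ → ℝ)
    (hf₂ : ∀ t, f₂ t = A₂ / 4 * (2 * t + Real.sinh (2 * t)))
    (hf₃ : ∀ t, f₃ t = A₃ / 4 * (2 * t + Real.sinh (2 * t)))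
    (hdd₂ : ∀ v, dd₂ v = -(1 / 2) * Real.log (2 * v / B₂))
    (hdd₃ : ∀ v, dd₃ v = -(1 / 2) * Real.log (2 * v / B₃))
    (hvt₂ : vt₂ = A₂ / 4 * (1 + Real.cosh (2 * d₂)))
    (hvt₃ : vt₃ = A₃ / 4 * (1 + Real.cosh (2 * d₃)))
    (V : ℝ → ℝ)
    (hVle : ∀ v, 0 < v → v ≤ v₁ → V v = v + f₂ (dd₂ v) + f₃ (d₃ + d₂ - dd₂ v))
    (hVge : ∀ v, v₁ ≤ v → V v = v + f₂ (dd₂ v) + f₃ (dd₃ v)) :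
    HasDerivWithinAt V (1 - vt₂ / v₁ + vt₃ / v₁) (Set.Ioc 0 v₁) v₁ ∧
    HasDerivWithinAt V (1 - vt₂ / v₁ - vt₃ / v₁) (Set.Ici v₁) v₁ :=
  caseIII_onesided_derivs_general A₂ A₃ B₂ B₃ d₂ d₃ v₁ vt₂ vt₃ hB₂ hB₃ hv₁₂ hv₁₃ f₂ f₃ dd₂ dd₃ hf₂
    hf₃ hdd₂ hdd₃ hvt₂ hvt₃ V hVle hVge
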